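/- Let w be a weight structure on a triangulated category C with idempotent-complete heart. Suppose given an m-weight decomposition triangle T: w_{≤m}M → M → w_{≥m+1}M → w_{≤m}M[1] and an idempotent endomorphism h of w_{≤m}M compatible with id_M (i.e., the arrow w_{≤m}M → M composed after h equals itself). Then there is a direct sum decomposition w_{≤m}M ≅ M₁ ⊕ M₀ realizing h as projection onto M₁, with M₀ ∈ C_{w=m}, and the triangle T decomposes as the direct sum of an m-weight decomposition M₁ → M → M₂ → M₁[1] and the triangle M₀ → 0 → M₀[1] → M₀[1]. -/

import Mathlib

open CategoryTheory Limits Pretriangulated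

structure WeightStructure (C : Type*) [Category C] [Preadditive C] [HasZeroObject C]
    [HasShift C ℤ] [∀ n : ℤ, (CategoryTheory.shiftFunctor C n).Additive] [Pretriangulated C] where
  le : Set C
  ge : Set C
  le_retract : ∀ ⦃X Y : C⦄, Y ∈ le → ∀ (i : X ⟶ Y) (r : Y ⟶ X), i ≫ r = 𝟙 X → X ∈ le
  ge_retract : ∀ ⦃X Y : C⦄, Y ∈ ge → ∀ (i : X ⟶ Y) (r : Y ⟶ X), i ≫ r = 𝟙 X → X ∈ ge
  le_shift : ∀ ⦃X : C⦄, X ∈ le → X⟦(-1 : ℤ)⟧ ∈ le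
  ge_shift : ∀ ⦃X : C⦄, X ∈ ge → X⟦(1 : ℤ)⟧ ∈ ge
  orth : ∀ ⦃X Y : C⦄, X ∈ le → Y ∈ ge → ∀ f : X ⟶ Y⟦(1 : ℤ)⟧, f = 0
  decomp : ∀ M : C, ∃ (L R : C) (f : L ⟶ M) (g : M ⟶ R) (δ : R ⟶ L⟦(1 : ℤ)⟧),
    (Triangle.mk f g δ ∈ distTriang C) ∧ L ∈ le ∧ R⟦(-1 : ℤ)⟧ ∈ ge

namespace WeightStructure

variable {C : Type*} [Category C] [Preadditive C] [HasZeroObject C]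
  [HasShift C ℤ] [∀ n : ℤ, (CategoryTheory.shiftFunctor C n).Additive] [Pretriangulated C]
  (w : WeightStructure C)

/-- The class `C_{w ≤ n} = C_{w≤0}[n]`. -/
def Le (n : ℤ) : Set C := {X | X⟦(-n)⟧ ∈ w.le}

/-- The class `C_{w ≥ n} = C_{w≥0}[n]`. -/
def Ge (n : ℤ) : Set C := {X | X⟦(-n)⟧ ∈ w.ge}

/-- `f, g, δ` form a `k`-weight decomposition triangle of `M`. -/
def IsWeightDecomp (k : ℤ) {A M B : C} (f : A ⟶ M) (g : M ⟶ B) (δ : B ⟶ A⟦(1 : ℤ)⟧) : Prop :=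
  (Triangle.mk f g δ ∈ distTriang C) ∧ A ∈ w.Le k ∧ B ∈ w.Ge (k + 1)

/-- `g : M ⟶ N` kills weights `m,…,n`. -/
def KillsWeights (m n : ℤ) {M N : C} (g : M ⟶ N) : Prop :=
  ∃ (A B A' B' : C) (a : A ⟶ M) (b : M ⟶ B) (δ : B ⟶ A⟦(1 : ℤ)⟧)
    (a' : A' ⟶ N) (b' : N ⟶ B') (δ' : B' ⟶ A'⟦(1 : ℤ)⟧),
    w.IsWeightDecomp n a b δ ∧ w.IsWeightDecomp (m - 1) a' b' δ' ∧ a ≫ g ≫ b' = 0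

/-- `M` is without weights `m,…,n`. -/
def WithoutWeights (m n : ℤ) (M : C) : Prop := w.KillsWeights m n (𝟙 M)

end WeightStructure

/-- The heart of `w` is idempotent complete. -/
def WeightStructure.WeightKaroubian {C : Type*} [Category C] [Preadditive C] [HasZeroObject C]
    [HasShift C ℤ] [∀ n : ℤ, (CategoryTheory.shiftFunctor C n).Additive] [Pretriangulated C]
    (w : WeightStructure C) : Prop :=
  ∀ X : C, X ∈ w.Le 0 ∩ w.Ge 0 → ∀ e : X ⟶ X, e ≫ e = e →
    ∃ (Y : C) (_ : Y ∈ w.Le 0 ∩ w.Ge 0) (i : Y ⟶ X) (p : X ⟶ Y),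
      i ≫ p = 𝟙 Y ∧ p ≫ i = e

/-!
Put `e = 𝟙 - h`; then `e ≫ f = 0`, so `e` factors through `B⟦-1⟧`, which has weights `≥ m`.
As `A` has weights `≤ m`, the factorization can be pushed into the `w_{≤ m}`-part of `B⟦-1⟧`,
which lies in `C_{w=m}`; the idempotent `e` then splits there because the heart is Karoubian.
This gives `M₀`, and in a pretriangulated category a split summand has a complement `M₁`.
Completing `M₁ → M` to a distinguished triangle and comparing it with the given one in both
directions gives maps between `B` and `M₂`; corrected by an invertible endomorphism of the
triangle, they exhibit `B` as `M₂ ⊕ M₀⟦1⟧`, because the sum of the resulting projectors is an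
idempotent isomorphism, i.e. the identity.
-/

section Biproduct

variable {C : Type*} [Category C] [Preadditive C]

structure IsBiprodDecomp {X X₁ X₀ : C} (inl : X₁ ⟶ X) (fst : X ⟶ X₁) (inr : X₀ ⟶ X)
    (snd : X ⟶ X₀) : Prop where
  inl_fst : inl ≫ fst = 𝟙 X₁
  inr_snd : inr ≫ snd = 𝟙 X₀
  inl_snd : inl ≫ snd = 0
  inr_fst : inr ≫ fst = 0
  total : fst ≫ inl + snd ≫ inr = 𝟙 X

lemma IsBiprodDecomp.fst_inl_comp {X X₁ X₀ Y : C} {inl : X₁ ⟶ X} {fst : X ⟶ X₁} {inr : X₀ ⟶ X}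
    {snd : X ⟶ X₀} (hX : IsBiprodDecomp inl fst inr snd) {f : X ⟶ Y} (hf : inr ≫ f = 0) :
    fst ≫ inl ≫ f = f := by
  simpa [Preadditive.add_comp, hf] using hX.total =≫ f

lemma IsBiprodDecomp.of_isIso_total {X X₁ X₀ : C} {inl : X₁ ⟶ X} {fst : X ⟶ X₁} {inr : X₀ ⟶ X}
    {snd : X ⟶ X₀} (inl_fst : inl ≫ fst = 𝟙 X₁) (inr_snd : inr ≫ snd = 𝟙 X₀)
    (inl_snd : inl ≫ snd = 0) (inr_fst : inr ≫ fst = 0) (h : IsIso (fst ≫ inl + snd ≫ inr)) :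
    IsBiprodDecomp inl fst inr snd := by
  refine ⟨inl_fst, inr_snd, inl_snd, inr_fst, ?_⟩
  -- an idempotent isomorphism is the identity
  refine (cancel_epi (fst ≫ inl + snd ≫ inr)).1 ?_
  simp [reassoc_of% inl_fst, reassoc_of% inr_snd, reassoc_of% inl_snd,
    reassoc_of% inr_fst]

end Biproduct

section Pretriangulated

variable {C : Type*} [Category C] [Preadditive C] [HasZeroObject C] [HasShift C ℤ]
  [∀ n : ℤ, (shiftFunctor C n).Additive] [Pretriangulated C]

lemma exists_isBiprodDecomp_of_retraction {X X₀ : C} {inr : X₀ ⟶ X} {snd : X ⟶ X₀}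
    (h : inr ≫ snd = 𝟙 X₀) :
    ∃ (X₁ : C) (inl : X₁ ⟶ X) (fst : X ⟶ X₁), IsBiprodDecomp inl fst inr snd := by
  obtain ⟨X₁, fst, d, hT⟩ := distinguished_cocone_triangle inr
  have hd : d = 0 := by
    have : d ≫ inr⟦(1 : ℤ)⟧' = 0 := comp_distTriang_mor_zero₃₁ _ hT
    simpa [← Functor.map_comp, h] using this =≫ snd⟦(1 : ℤ)⟧'
  obtain ⟨s, hs⟩ : ∃ s : X₁ ⟶ X, 𝟙 X₁ = s ≫ fst :=
    Triangle.coyoneda_exact₃ _ hT (𝟙 X₁) (show 𝟙 X₁ ≫ d = 0 by simp [hd])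
  have inr_fst : inr ≫ fst = 0 := comp_distTriang_mor_zero₁₂ _ hT
  let inl : X₁ ⟶ X := s ≫ (𝟙 X - snd ≫ inr)
  have inl_fst : inl ≫ fst = 𝟙 X₁ := by simp [inl, inr_fst, ← hs]
  have inl_snd : inl ≫ snd = 0 := by simp [inl, h]
  refine ⟨X₁, inl, fst, inl_fst, h, inl_snd, inr_fst, ?_⟩
  -- the defect of `total` is killed by `fst`, so it factors through `inr`; it is killed by `snd`
  obtain ⟨y, hy⟩ : ∃ y : X ⟶ X₀, 𝟙 X - fst ≫ inl - snd ≫ inr = y ≫ inr :=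
    Triangle.coyoneda_exact₂ _ hT (𝟙 X - fst ≫ inl - snd ≫ inr)
      (show (𝟙 X - fst ≫ inl - snd ≫ inr) ≫ fst = 0 by simp [inl_fst, inr_fst])
  have hy0 : y = 0 := by simpa [inl_snd, h, reassoc_of% h] using (hy =≫ snd).symm
  rw [hy0, zero_comp, sub_sub, sub_eq_zero] at hy
  exact hy.symm

lemma isIso_of_mor₂_comp_of_comp_mor₃ {T : Triangle C} (hT : T ∈ distTriang C)
    (x : T.obj₃ ⟶ T.obj₃) (h₂ : T.mor₂ ≫ x = T.mor₂) (h₃ : x ≫ T.mor₃ = T.mor₃) : IsIso x :=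
  isIso₃_of_isIso₁₂ (Triangle.homMk T T (𝟙 _) (𝟙 _) x (by simp) (by simp [h₂]) (by simp [h₃]))
    hT hT (IsIso.id T.obj₁) (IsIso.id T.obj₂)

lemma mk_comp_iso_hom_distinguished {X₁ X₂ X₃ Y : C} {f : X₁ ⟶ X₂} {g : X₂ ⟶ X₃}
    {h : X₃ ⟶ X₁⟦(1 : ℤ)⟧} (hT : Triangle.mk f g h ∈ distTriang C) (e : X₂ ≅ Y) :
    Triangle.mk (f ≫ e.hom) (e.inv ≫ g) h ∈ distTriang C :=
  isomorphic_distinguished _ hT _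
    (Triangle.isoMk _ _ (Iso.refl _) e.symm (Iso.refl _)
      (show (f ≫ e.hom) ≫ e.inv = 𝟙 X₁ ≫ f by simp)
      (show (e.inv ≫ g) ≫ 𝟙 X₃ = e.inv ≫ g by simp)
      (show h ≫ (𝟙 X₁)⟦1⟧' = 𝟙 X₃ ≫ h by simp))

lemma exists_isBiprodDecomp_obj₃ {A M B M₁ M₀ M₂ : C} {f : A ⟶ M} {g : M ⟶ B}
    {δ : B ⟶ A⟦(1 : ℤ)⟧} (hT : Triangle.mk f g δ ∈ distTriang C)
    {i₁ : M₁ ⟶ A} {p₁ : A ⟶ M₁} {i₀ : M₀ ⟶ A} {p₀ : A ⟶ M₀} (hA : IsBiprodDecomp i₁ p₁ i₀ p₀)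
    (hi₀f : i₀ ≫ f = 0) {g₁ : M ⟶ M₂} {δ₁ : M₂ ⟶ M₁⟦(1 : ℤ)⟧}
    (hT₁ : Triangle.mk (i₁ ≫ f) g₁ δ₁ ∈ distTriang C) :
    ∃ (j₂ : M₂ ⟶ B) (q₂ : B ⟶ M₂) (j₀ : M₀⟦(1 : ℤ)⟧ ⟶ B) (q₀ : B ⟶ M₀⟦(1 : ℤ)⟧),
      IsBiprodDecomp j₂ q₂ j₀ q₀ ∧ g = g₁ ≫ j₂ ∧ δ = q₂ ≫ δ₁ ≫ i₁⟦1⟧' + q₀ ≫ i₀⟦1⟧' := by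
  obtain ⟨j₂, hj₂g, hj₂δ⟩ : ∃ j₂ : M₂ ⟶ B, g₁ ≫ j₂ = 𝟙 M ≫ g ∧ δ₁ ≫ i₁⟦1⟧' = j₂ ≫ δ :=
    complete_distinguished_triangle_morphism _ _ hT₁ hT i₁ (𝟙 M) (Category.comp_id _)
  obtain ⟨q, hqg, hqδ⟩ : ∃ q : B ⟶ M₂, g ≫ q = 𝟙 M ≫ g₁ ∧ δ ≫ p₁⟦1⟧' = q ≫ δ₁ :=
    complete_distinguished_triangle_morphism _ _ hT hT₁ p₁ (𝟙 M)
      (show f ≫ 𝟙 M = p₁ ≫ i₁ ≫ f by simp [hA.fst_inl_comp hi₀f])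
  obtain ⟨j₀, hj₀⟩ : ∃ j₀ : M₀⟦(1 : ℤ)⟧ ⟶ B, i₀⟦1⟧' = j₀ ≫ δ :=
    Triangle.coyoneda_exact₃ _ (rot_of_distTriang _ hT) (i₀⟦1⟧')
      (show i₀⟦1⟧' ≫ (-f⟦1⟧') = 0 by simp [← Functor.map_comp, hi₀f])
  rw [Category.id_comp] at hj₂g hqg
  let q₀ : B ⟶ M₀⟦(1 : ℤ)⟧ := δ ≫ p₀⟦1⟧'
  have j₀_q₀ : j₀ ≫ q₀ = 𝟙 _ := by simp [q₀, ← reassoc_of% hj₀, ← Functor.map_comp, hA.inr_snd]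
  have j₂_q₀ : j₂ ≫ q₀ = 0 := by simp [q₀, ← reassoc_of% hj₂δ, ← Functor.map_comp, hA.inl_snd]
  have g_δ : g ≫ δ = 0 := comp_distTriang_mor_zero₂₃ _ hT
  have g_q₀ : g ≫ q₀ = 0 := by rw [← Category.assoc, g_δ, zero_comp]
  have jq_δ₁ : (j₂ ≫ q) ≫ δ₁ = δ₁ := by
    rw [Category.assoc, ← hqδ, ← reassoc_of% hj₂δ, ← Functor.map_comp, hA.inl_fst,
      CategoryTheory.Functor.map_id, Category.comp_id]
  have : IsIso (j₂ ≫ q) := isIso_of_mor₂_comp_of_comp_mor₃ hT₁ _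
    (show g₁ ≫ j₂ ≫ q = g₁ by rw [reassoc_of% hj₂g, hqg]) jq_δ₁
  -- `q` corrected so that `j₂ ≫ q₂ = 𝟙` and `j₀ ≫ q₂ = 0`
  let q₂ : B ⟶ M₂ := (𝟙 B - q₀ ≫ j₀) ≫ q ≫ inv (j₂ ≫ q)
  have j₂_q₂ : j₂ ≫ q₂ = 𝟙 M₂ := by
    simp only [q₂, Preadditive.comp_sub, Preadditive.sub_comp, Category.comp_id,
      reassoc_of% j₂_q₀, zero_comp, sub_zero, ← Category.assoc, IsIso.hom_inv_id]
  have j₀_q₂ : j₀ ≫ q₂ = 0 := by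
    simp only [q₂, Preadditive.comp_sub_assoc, Category.comp_id, reassoc_of% j₀_q₀,
      sub_self, zero_comp]
  have g_q₂ : g ≫ q₂ = g₁ := by
    simp only [q₂, Preadditive.comp_sub_assoc, Category.comp_id, reassoc_of% g_q₀, zero_comp,
      sub_zero, reassoc_of% hqg]
    rw [IsIso.comp_inv_eq, reassoc_of% hj₂g, hqg]
  have q₂_δ₁ : q₂ ≫ δ₁ = q ≫ δ₁ := by
    have j₀_q_δ₁ : j₀ ≫ q ≫ δ₁ = 0 := by
      rw [← hqδ, ← reassoc_of% hj₀, ← CategoryTheory.Functor.map_comp, hA.inr_fst,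
        CategoryTheory.Functor.map_zero]
    have inv_δ₁ : inv (j₂ ≫ q) ≫ δ₁ = δ₁ := by rw [IsIso.inv_comp_eq, jq_δ₁]
    simp only [q₂, Category.assoc, inv_δ₁, Preadditive.sub_comp, Category.id_comp, j₀_q_δ₁,
      comp_zero, sub_zero]
  have hδ : δ = q₂ ≫ δ₁ ≫ i₁⟦1⟧' + q₀ ≫ i₀⟦1⟧' := by
    calc δ = δ ≫ (p₁ ≫ i₁ + p₀ ≫ i₀)⟦1⟧' := by
          rw [hA.total, CategoryTheory.Functor.map_id, Category.comp_id]
      _ = (δ ≫ p₁⟦1⟧') ≫ i₁⟦1⟧' + q₀ ≫ i₀⟦1⟧' := by simp [q₀]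
      _ = q₂ ≫ δ₁ ≫ i₁⟦1⟧' + q₀ ≫ i₀⟦1⟧' := by rw [hqδ, ← q₂_δ₁, Category.assoc]
  refine ⟨j₂, q₂, j₀, q₀, IsBiprodDecomp.of_isIso_total j₂_q₂ j₀_q₀ j₂_q₀ j₀_q₂ ?_, hj₂g.symm, hδ⟩
  exact isIso_of_mor₂_comp_of_comp_mor₃ hT _
    (show g ≫ (q₂ ≫ j₂ + q₀ ≫ j₀) = g by
      rw [Preadditive.comp_add, reassoc_of% g_q₂, reassoc_of% g_q₀, hj₂g, zero_comp, add_zero])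
    (show (q₂ ≫ j₂ + q₀ ≫ j₀) ≫ δ = δ by
      rw [Preadditive.add_comp, Category.assoc q₂, Category.assoc q₀, ← hj₂δ, ← hj₀, ← hδ])

end Pretriangulated

namespace WeightStructure

variable {C : Type*} [Category C] [Preadditive C] [HasZeroObject C] [HasShift C ℤ]
  [∀ n : ℤ, (shiftFunctor C n).Additive] [Pretriangulated C] (w : WeightStructure C)

lemma mem_le_of_iso {X Y : C} (e : X ≅ Y) (hY : Y ∈ w.le) : X ∈ w.le :=
  w.le_retract hY e.hom e.inv e.hom_inv_id

lemma mem_ge_of_iso {X Y : C} (e : X ≅ Y) (hY : Y ∈ w.ge) : X ∈ w.ge :=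
  w.ge_retract hY e.hom e.inv e.hom_inv_id

lemma mem_Le_of_retract {k : ℤ} {X Y : C} (hY : Y ∈ w.Le k) (i : X ⟶ Y) (r : Y ⟶ X)
    (h : i ≫ r = 𝟙 X) : X ∈ w.Le k :=
  w.le_retract hY (i⟦-k⟧') (r⟦-k⟧') (by simp [← Functor.map_comp, h])

lemma mem_Ge_of_retract {k : ℤ} {X Y : C} (hY : Y ∈ w.Ge k) (i : X ⟶ Y) (r : Y ⟶ X)
    (h : i ≫ r = 𝟙 X) : X ∈ w.Ge k :=
  w.ge_retract hY (i⟦-k⟧') (r⟦-k⟧') (by simp [← Functor.map_comp, h])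

lemma shift_mem_Le {n : ℤ} {X : C} (hX : X ∈ w.Le n) (a b : ℤ) (h : n + a = b) :
    X⟦a⟧ ∈ w.Le b :=
  w.mem_le_of_iso ((shiftFunctorAdd' C a (-b) (-n) (by omega)).app X).symm hX

lemma shift_mem_Ge {n : ℤ} {X : C} (hX : X ∈ w.Ge n) (a b : ℤ) (h : n + a = b) :
    X⟦a⟧ ∈ w.Ge b :=
  w.mem_ge_of_iso ((shiftFunctorAdd' C a (-b) (-n) (by omega)).app X).symm hX

lemma hom_eq_zero {k : ℤ} {X Y : C} (hX : X ∈ w.Le k) (hY : Y ∈ w.Ge (k + 1)) (φ : X ⟶ Y) :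
    φ = 0 := by
  have : φ⟦-k⟧' ≫ ((shiftFunctorAdd' C (-(k + 1)) 1 (-k) (by omega)).app Y).hom = 0 :=
    w.orth hX hY _
  rw [Preadditive.IsIso.comp_right_eq_zero] at this
  exact (shiftFunctor C (-k)).map_injective (by rw [this, CategoryTheory.Functor.map_zero])

lemma exists_isWeightDecomp (k : ℤ) (M : C) :
    ∃ (L R : C) (a : L ⟶ M) (b : M ⟶ R) (d : R ⟶ L⟦(1 : ℤ)⟧), w.IsWeightDecomp k a b d := by
  obtain ⟨L, R, a, b, d, hT, hL, hR⟩ := w.decomp (M⟦-k⟧)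
  have hS := mk_comp_iso_hom_distinguished (Triangle.shift_distinguished _ hT k)
    ((shiftFunctorCompIsoId C (-k) k (by omega)).app M)
  exact ⟨_, _, _, _, _, hS,
    w.mem_le_of_iso ((shiftFunctorCompIsoId C k (-k) (by omega)).app L) hL,
    w.mem_ge_of_iso ((shiftFunctorAdd' C k (-(k + 1)) (-1) (by omega)).app R).symm hR⟩

lemma mem_Ge_of_distTriang {k : ℤ} {T : Triangle C} (hT : T ∈ distTriang C)
    (h₁ : T.obj₁ ∈ w.Ge k) (h₃ : T.obj₃ ∈ w.Ge k) : T.obj₂ ∈ w.Ge k := by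
  obtain ⟨L, R, a, b, d, hT', hL, hR⟩ := w.exists_isWeightDecomp (k - 1) T.obj₂
  have hk : k - 1 + 1 = k := by omega
  rw [hk] at hR
  -- `a` vanishes, so `T.obj₂` is a retract of `R`
  have ha₂ : a ≫ T.mor₂ = 0 := w.hom_eq_zero hL (by rwa [hk]) _
  obtain ⟨a', ha'⟩ := Triangle.coyoneda_exact₂ T hT a ha₂
  have ha : a = 0 := by rw [ha', w.hom_eq_zero hL (by rwa [hk]) a', zero_comp]
  obtain ⟨s, hs⟩ := Triangle.yoneda_exact₂ _ hT' (𝟙 T.obj₂)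
    (show a ≫ 𝟙 T.obj₂ = 0 by rw [ha, zero_comp])
  exact w.mem_Ge_of_retract hR b s hs.symm

lemma exists_factorization_through_heart {k : ℤ} {X N : C} (hX : X ∈ w.Le k) (hN : N ∈ w.Ge k)
    (φ : X ⟶ N) :
    ∃ (L : C) (_ : L ∈ w.Le k ∩ w.Ge k) (u : X ⟶ L) (v : L ⟶ N), φ = u ≫ v := by
  obtain ⟨L, R, a, b, d, hT, hL, hR⟩ := w.exists_isWeightDecomp k N
  have hL' : L ∈ w.Ge k := w.mem_Ge_of_distTriang (inv_rot_of_distTriang _ hT)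
    (w.shift_mem_Ge hR (-1) k (by omega)) hN
  obtain ⟨u, hu⟩ := Triangle.coyoneda_exact₂ _ hT φ (w.hom_eq_zero hX hR _)
  exact ⟨L, ⟨hL, hL'⟩, u, a, hu⟩

variable {w}

lemma WeightKaroubian.exists_split (hkar : w.WeightKaroubian) {k : ℤ} {X : C}
    (hX : X ∈ w.Le k ∩ w.Ge k) {e : X ⟶ X} (he : e ≫ e = e) :
    ∃ (Y : C) (_ : Y ∈ w.Le k ∩ w.Ge k) (i : Y ⟶ X) (p : X ⟶ Y), i ≫ p = 𝟙 Y ∧ p ≫ i = e := by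
  obtain ⟨Y, hY, i, p, hip, hpi⟩ := hkar _
    ⟨w.shift_mem_Le hX.1 (-k) 0 (by omega), w.shift_mem_Ge hX.2 (-k) 0 (by omega)⟩ (e⟦-k⟧')
    (by rw [← CategoryTheory.Functor.map_comp, he])
  let u : (X⟦-k⟧)⟦k⟧ ≅ X := (shiftFunctorCompIsoId C (-k) k (by omega)).app X
  have hu : (e⟦-k⟧')⟦k⟧' ≫ u.hom = u.hom ≫ e :=
    (shiftFunctorCompIsoId C (-k) k _).hom.naturality e
  refine ⟨Y⟦k⟧, ⟨w.shift_mem_Le hY.1 k k (by omega), w.shift_mem_Ge hY.2 k k (by omega)⟩,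
    i⟦k⟧' ≫ u.hom, u.inv ≫ p⟦k⟧', ?_, ?_⟩
  · rw [Category.assoc, Iso.hom_inv_id_assoc, ← CategoryTheory.Functor.map_comp, hip,
      CategoryTheory.Functor.map_id]
  · rw [Category.assoc, ← CategoryTheory.Functor.map_comp_assoc, hpi, hu, Iso.inv_hom_id_assoc]

lemma WeightKaroubian.exists_split_of_factorization (hkar : w.WeightKaroubian) {k : ℤ} {X Y : C}
    (hY : Y ∈ w.Le k ∩ w.Ge k) {e : X ⟶ X} (he : e ≫ e = e) (u : X ⟶ Y) (v : Y ⟶ X)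
    (huv : u ≫ v = e) :
    ∃ (Z : C) (_ : Z ∈ w.Le k ∩ w.Ge k) (i : Z ⟶ X) (p : X ⟶ Z), i ≫ p = 𝟙 Z ∧ p ≫ i = e := by
  -- an idempotent on `Y` with the same image as `e`
  have hε : (v ≫ e ≫ u) ≫ v ≫ e ≫ u = v ≫ e ≫ u := by
    simp only [Category.assoc, reassoc_of% huv, reassoc_of% he]
  obtain ⟨Z, hZ, i, p, hip, hpi⟩ := hkar.exists_split hY hε
  refine ⟨Z, hZ, i ≫ v, e ≫ u ≫ p, ?_, ?_⟩
  · calc (i ≫ v) ≫ e ≫ u ≫ p = i ≫ (v ≫ e ≫ u) ≫ p := by simp only [Category.assoc]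
      _ = 𝟙 Z := by rw [← hpi, Category.assoc, reassoc_of% hip, hip]
  · calc (e ≫ u ≫ p) ≫ i ≫ v = e ≫ u ≫ (p ≫ i) ≫ v := by simp only [Category.assoc]
      _ = e := by rw [hpi]; simp only [Category.assoc, reassoc_of% huv, huv, he]

lemma WeightKaroubian.exists_split_of_comp_eq_zero (hkar : w.WeightKaroubian) {m : ℤ}
    {A M B : C} {f : A ⟶ M} {g : M ⟶ B} {δ : B ⟶ A⟦(1 : ℤ)⟧} (hd : w.IsWeightDecomp m f g δ)
    {e : A ⟶ A} (he : e ≫ e = e) (hef : e ≫ f = 0) :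
    ∃ (M₀ : C) (_ : M₀ ∈ w.Le m ∩ w.Ge m) (i₀ : M₀ ⟶ A) (p₀ : A ⟶ M₀),
      i₀ ≫ p₀ = 𝟙 M₀ ∧ p₀ ≫ i₀ = e := by
  obtain ⟨hT, hA, hB⟩ := hd
  let ι : B⟦(-1 : ℤ)⟧ ⟶ A := (Triangle.mk f g δ).invRotate.mor₁
  obtain ⟨φ, hφ⟩ : ∃ φ : A ⟶ B⟦(-1 : ℤ)⟧, e = φ ≫ ι :=
    Triangle.coyoneda_exact₂ _ (inv_rot_of_distTriang _ hT) e hef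
  obtain ⟨L, hL, u, v, huv⟩ :=
    w.exists_factorization_through_heart hA (w.shift_mem_Ge hB (-1) m (by omega)) φ
  exact hkar.exists_split_of_factorization hL he u (v ≫ ι)
    (by rw [← Category.assoc, ← huv, hφ])

end WeightStructure

/-- splitting an idempotent compatible with the identity on an
`m`-weight decomposition. -/
theorem weight_decomposition_splits_idempotent {C : Type*} [Category C] [Preadditive C]
    [HasZeroObject C] [HasShift C ℤ] [∀ n : ℤ, (CategoryTheory.shiftFunctor C n).Additive]
    [Pretriangulated C] (w : WeightStructure C) (hkar : w.WeightKaroubian)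
    (m : ℤ) {A M B : C} (f : A ⟶ M) (g : M ⟶ B) (δ : B ⟶ A⟦(1 : ℤ)⟧)
    (hd : w.IsWeightDecomp m f g δ)
    (h : A ⟶ A) (hidem : h ≫ h = h) (hcomp : h ≫ f = f) :
    ∃ (M₁ M₀ : C) (i₁ : M₁ ⟶ A) (p₁ : A ⟶ M₁) (i₀ : M₀ ⟶ A) (p₀ : A ⟶ M₀),
      -- `A ≅ M₁ ⊕ M₀`, with `h` the projection onto `M₁`
      i₁ ≫ p₁ = 𝟙 M₁ ∧ i₀ ≫ p₀ = 𝟙 M₀ ∧ i₁ ≫ p₀ = 0 ∧ i₀ ≫ p₁ = 0 ∧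
      p₁ ≫ i₁ + p₀ ≫ i₀ = 𝟙 A ∧ p₁ ≫ i₁ = h ∧
      -- `M₀` is of weight exactly `m`
      M₀ ∈ w.Le m ∩ w.Ge m ∧
      -- the triangle decomposes as the direct sum of an `m`-weight decomposition
      -- `M₁ → M → M₂ → M₁[1]` and the triangle `M₀ → 0 → M₀[1] → M₀[1]`
      ∃ (M₂ : C) (f₁ : M₁ ⟶ M) (g₁ : M ⟶ M₂) (δ₁ : M₂ ⟶ M₁⟦(1 : ℤ)⟧),
        w.IsWeightDecomp m f₁ g₁ δ₁ ∧
        ∃ (j₂ : M₂ ⟶ B) (q₂ : B ⟶ M₂) (j₀ : M₀⟦(1 : ℤ)⟧ ⟶ B) (q₀ : B ⟶ M₀⟦(1 : ℤ)⟧),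
          j₂ ≫ q₂ = 𝟙 M₂ ∧ j₀ ≫ q₀ = 𝟙 (M₀⟦(1 : ℤ)⟧) ∧ j₂ ≫ q₀ = 0 ∧ j₀ ≫ q₂ = 0 ∧
          q₂ ≫ j₂ + q₀ ≫ j₀ = 𝟙 B ∧
          f = p₁ ≫ f₁ ∧ g = g₁ ≫ j₂ ∧
          δ = q₂ ≫ δ₁ ≫ (CategoryTheory.shiftFunctor C (1 : ℤ)).map i₁ +
            q₀ ≫ (CategoryTheory.shiftFunctor C (1 : ℤ)).map i₀ := by
  have he : (𝟙 A - h) ≫ (𝟙 A - h) = 𝟙 A - h := by simp [hidem]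
  have hef : (𝟙 A - h) ≫ f = 0 := by simp [hcomp]
  obtain ⟨M₀, hM₀, i₀, p₀, hi₀p₀, hp₀i₀⟩ := hkar.exists_split_of_comp_eq_zero hd he hef
  obtain ⟨M₁, i₁, p₁, hA⟩ := exists_isBiprodDecomp_of_retraction hi₀p₀
  have hp₁i₁ : p₁ ≫ i₁ = h := by rw [eq_sub_of_add_eq hA.total, hp₀i₀, sub_sub_cancel]
  have hi₀f : i₀ ≫ f = 0 :=
    calc i₀ ≫ f = i₀ ≫ (p₀ ≫ i₀) ≫ f := by rw [Category.assoc, reassoc_of% hi₀p₀]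
      _ = 0 := by rw [hp₀i₀, hef, comp_zero]
  obtain ⟨M₂, g₁, δ₁, hT₁⟩ := distinguished_cocone_triangle (i₁ ≫ f)
  obtain ⟨j₂, q₂, j₀, q₀, hB, hg, hδ⟩ := exists_isBiprodDecomp_obj₃ hd.1 hA hi₀f hT₁
  exact ⟨M₁, M₀, i₁, p₁, i₀, p₀, hA.inl_fst, hA.inr_snd, hA.inl_snd, hA.inr_fst, hA.total, hp₁i₁,
    hM₀, M₂, i₁ ≫ f, g₁, δ₁,
    ⟨hT₁, w.mem_Le_of_retract hd.2.1 i₁ p₁ hA.inl_fst, w.mem_Ge_of_retract hd.2.2 j₂ q₂ hB.inl_fst⟩,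
    j₂, q₂, j₀, q₀, hB.inl_fst, hB.inr_snd, hB.inl_snd, hB.inr_fst, hB.total,
    (hA.fst_inl_comp hi₀f).symm, hg, hδ⟩
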